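/- arXiv:2107.08135 — 6 statements merged into one kernel-verified Lean document; each statement's English description precedes it below -/
import Mathlib

section
/- Let (X, U, Y) be random variables, h*(u) := E[Y | U = u] with h*(U) square-integrable, and f*(x) := E[h*(U) | X = x]. Let ℱ be a set of measurable functions 𝒳 → ℝ with square-integrable f(X) containing f*, and ℋ a set of measurable functions 𝒰 → ℝ with square-integrable h(U) containing h*. Then for every w ∈ (0, 1): E[(f*(X) − h*(U))²] ≤ inf over (f, h) ∈ ℱ × ℋ of [ (1/w)·E[(f(X) − h(U))²] + (1/(1−w))·E[(h(U) − h*(U))²] ] ≤ (1/w)·E[(f*(X) − h*(U))²]. -/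
/-!
`f*(X)` is the conditional expectation of `h*(U)` given `X`, hence its best `σ(X)`-measurable
mean-square approximation: `E[(f*(X) − h*(U))²] ≤ E[(f(X) − h*(U))²]` for every `f ∈ ℱ`.
Splitting `f(X) − h*(U) = (f(X) − h(U)) + (h(U) − h*(U))` and using the weighted inequality
`(a + b)² ≤ a²/w + b²/(1 − w)` bounds the right side by `Q(w, f, h)`, which gives the lower bound.
The upper bound is the value of `Q` at `(f*, h*)`.
-/

open MeasureTheory

theorem add_sq_le_inv_mul_add_inv_mul {w : ℝ} (hw₀ : 0 < w) (hw₁ : w < 1) (a b : ℝ) :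
    (a + b) ^ 2 ≤ 1 / w * a ^ 2 + 1 / (1 - w) * b ^ 2 := by
  have hw₁' : 0 < 1 - w := sub_pos.2 hw₁
  rw [div_mul_eq_mul_div, div_mul_eq_mul_div, div_add_div _ _ hw₀.ne' hw₁'.ne',
    le_div_iff₀ (by positivity)]
  nlinarith [sq_nonneg ((1 - w) * a - w * b)]

section

variable {Ω : Type*} {m m₀ : MeasurableSpace Ω} {μ : Measure Ω}

theorem integral_sq_add_le_inv_mul_add_inv_mul {w : ℝ} (hw₀ : 0 < w) (hw₁ : w < 1)
    {f g : Ω → ℝ} (hf : MemLp f 2 μ) (hg : MemLp g 2 μ) :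
    ∫ ω, (f ω + g ω) ^ 2 ∂μ ≤ 1 / w * ∫ ω, f ω ^ 2 ∂μ + 1 / (1 - w) * ∫ ω, g ω ^ 2 ∂μ := by
  rw [← integral_const_mul, ← integral_const_mul,
    ← integral_add (hf.integrable_sq.const_mul _) (hg.integrable_sq.const_mul _)]
  exact integral_mono (hf.add hg).integrable_sq
    ((hf.integrable_sq.const_mul _).add (hg.integrable_sq.const_mul _))
    fun ω => add_sq_le_inv_mul_add_inv_mul hw₀ hw₁ (f ω) (g ω)

theorem integral_add_sq {f g : Ω → ℝ} (hf : MemLp f 2 μ) (hg : MemLp g 2 μ) :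
    ∫ ω, (f ω + g ω) ^ 2 ∂μ
      = ∫ ω, f ω ^ 2 ∂μ + 2 * ∫ ω, f ω * g ω ∂μ + ∫ ω, g ω ^ 2 ∂μ := by
  have hfg : Integrable (fun ω => 2 * (f ω * g ω)) μ := (hf.integrable_mul hg).const_mul 2
  have hf_fg : Integrable (fun ω => f ω ^ 2 + 2 * (f ω * g ω)) μ := hf.integrable_sq.add hfg
  rw [← integral_const_mul, ← integral_add hf.integrable_sq hfg,
    ← integral_add hf_fg hg.integrable_sq]
  congr 1 with ω
  ring

theorem integral_mul_condExp_of_stronglyMeasurable (hm : m ≤ m₀) [IsFiniteMeasure μ]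
    {f g : Ω → ℝ} (hf : StronglyMeasurable[m] f) (hf₂ : MemLp f 2 μ) (hg : MemLp g 2 μ) :
    ∫ ω, f ω * μ[g | m] ω ∂μ = ∫ ω, f ω * g ω ∂μ := by
  have hfg : Integrable (f * g) μ := hf₂.integrable_mul hg
  calc ∫ ω, f ω * μ[g | m] ω ∂μ = ∫ ω, μ[f * g | m] ω ∂μ :=
        integral_congr_ae (condExp_mul_of_stronglyMeasurable_left hf hfg
          (hg.integrable one_le_two)).symm
    _ = ∫ ω, f ω * g ω ∂μ := integral_condExp hm

theorem integral_sq_condExp_sub_le (hm : m ≤ m₀) [IsFiniteMeasure μ] {f g : Ω → ℝ}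
    (hf : StronglyMeasurable[m] f) (hf₂ : MemLp f 2 μ) (hg : MemLp g 2 μ) :
    ∫ ω, (μ[g | m] ω - g ω) ^ 2 ∂μ ≤ ∫ ω, (f ω - g ω) ^ 2 ∂μ := by
  set c := μ[g | m]
  have hc₂ : MemLp c 2 μ := hg.condExp one_le_two
  have hdc : Integrable (fun ω => (f ω - c ω) * c ω) μ := (hf₂.sub hc₂).integrable_mul hc₂
  have hdg : Integrable (fun ω => (f ω - c ω) * g ω) μ := (hf₂.sub hc₂).integrable_mul hg
  have horth : ∫ ω, (f ω - c ω) * (c ω - g ω) ∂μ = 0 := by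
    simp_rw [mul_sub]
    rw [integral_sub hdc hdg, sub_eq_zero]
    exact integral_mul_condExp_of_stronglyMeasurable hm (hf.sub stronglyMeasurable_condExp)
      (hf₂.sub hc₂) hg
  have hpyth := integral_add_sq (hf₂.sub hc₂) (hc₂.sub hg)
  simp only [Pi.sub_apply, sub_add_sub_cancel] at hpyth
  have hsq : 0 ≤ ∫ ω, (f ω - c ω) ^ 2 ∂μ := integral_nonneg fun ω => sq_nonneg _
  linarith

end

theorem Q_inf_sandwich_general
    {Ω : Type*} [MeasurableSpace Ω] (μ : Measure Ω) [IsProbabilityMeasure μ]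
    {dX dU : ℕ}
    (X : Ω → (Fin dX → ℝ)) (U : Ω → (Fin dU → ℝ))
    (hX : Measurable X)
    (hstar : (Fin dU → ℝ) → ℝ)
    (hhstar2 : MemLp (fun ω => hstar (U ω)) 2 μ)
    (fstar : (Fin dX → ℝ) → ℝ)
    (hfstar : (fun ω => fstar (X ω))
      =ᵐ[μ] μ[fun ω => hstar (U ω) | MeasurableSpace.comap X inferInstance])
    (F : Set ((Fin dX → ℝ) → ℝ)) (H : Set ((Fin dU → ℝ) → ℝ))
    (hF : ∀ f ∈ F, Measurable f ∧ MemLp (fun ω => f (X ω)) 2 μ)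
    (hH : ∀ h ∈ H, Measurable h ∧ MemLp (fun ω => h (U ω)) 2 μ)
    (hfstarF : fstar ∈ F) (hhstarH : hstar ∈ H)
    (w : ℝ) (hw : w ∈ Set.Ioo (0 : ℝ) 1) :
    (∫ ω, (fstar (X ω) - hstar (U ω)) ^ 2 ∂μ
        ≤ ⨅ p : F × H,
            (1 / w) * ∫ ω, ((p.1 : (Fin dX → ℝ) → ℝ) (X ω)
                - (p.2 : (Fin dU → ℝ) → ℝ) (U ω)) ^ 2 ∂μ
              + (1 / (1 - w)) * ∫ ω, ((p.2 : (Fin dU → ℝ) → ℝ) (U ω)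
                - hstar (U ω)) ^ 2 ∂μ)
    ∧ (⨅ p : F × H,
            (1 / w) * ∫ ω, ((p.1 : (Fin dX → ℝ) → ℝ) (X ω)
                - (p.2 : (Fin dU → ℝ) → ℝ) (U ω)) ^ 2 ∂μ
              + (1 / (1 - w)) * ∫ ω, ((p.2 : (Fin dU → ℝ) → ℝ) (U ω)
                - hstar (U ω)) ^ 2 ∂μ)
        ≤ (1 / w) * ∫ ω, (fstar (X ω) - hstar (U ω)) ^ 2 ∂μ := by
  obtain ⟨hw₀, hw₁⟩ := hw
  have : Nonempty (F × H) := ⟨(⟨fstar, hfstarF⟩, ⟨hstar, hhstarH⟩)⟩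
  refine ⟨le_ciInf ?_,
    (ciInf_le ⟨0, ?_⟩ (⟨fstar, hfstarF⟩, ⟨hstar, hhstarH⟩)).trans_eq (by simp)⟩
  · rintro ⟨⟨f, hf⟩, ⟨h, hh⟩⟩
    have hfX : StronglyMeasurable[MeasurableSpace.comap X inferInstance] fun ω => f (X ω) :=
      ((hF f hf).1.comp (comap_measurable X)).stronglyMeasurable
    calc ∫ ω, (fstar (X ω) - hstar (U ω)) ^ 2 ∂μ
        = ∫ ω, (μ[fun ω => hstar (U ω) | MeasurableSpace.comap X inferInstance] ω
            - hstar (U ω)) ^ 2 ∂μ :=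
          integral_congr_ae <| hfstar.mono fun ω hω => by dsimp only at hω ⊢; rw [hω]
      _ ≤ ∫ ω, (f (X ω) - hstar (U ω)) ^ 2 ∂μ :=
        integral_sq_condExp_sub_le hX.comap_le hfX (hF f hf).2 hhstar2
      _ = ∫ ω, ((f (X ω) - h (U ω)) + (h (U ω) - hstar (U ω))) ^ 2 ∂μ := by
        simp_rw [sub_add_sub_cancel]
      _ ≤ _ := integral_sq_add_le_inv_mul_add_inv_mul hw₀ hw₁
        ((hF f hf).2.sub (hH h hh).2) ((hH h hh).2.sub hhstar2)
  · rintro _ ⟨p, rfl⟩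
    have hw₁' : 0 < 1 - w := sub_pos.2 hw₁
    exact add_nonneg (mul_nonneg (by positivity) (integral_nonneg fun ω => sq_nonneg _))
      (mul_nonneg (by positivity) (integral_nonneg fun ω => sq_nonneg _))

/-- sandwich bound for the inner infimum, proof of Theorem 3.
With `h*(u) := E[Y | U = u]`, `f*(x) := E[h*(U) | X = x]`, `f* ∈ ℱ`, `h* ∈ ℋ`, for every
`w ∈ (0,1)`:
`E[(f*(X) − h*(U))²] ≤ inf_{(f,h) ∈ ℱ×ℋ} Q(w,f,h) ≤ (1/w)·E[(f*(X) − h*(U))²]`,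
where `Q(w,f,h) := (1/w)·E[(f(X) − h(U))²] + (1/(1−w))·E[(h(U) − h*(U))²]`. -/
theorem Q_inf_sandwich
    {Ω : Type*} [MeasurableSpace Ω] (μ : Measure Ω) [IsProbabilityMeasure μ]
    {dX dU : ℕ}
    (X : Ω → (Fin dX → ℝ)) (U : Ω → (Fin dU → ℝ)) (Y : Ω → ℝ)
    (hX : Measurable X) (hU : Measurable U) (hY : Measurable Y)
    (hstar : (Fin dU → ℝ) → ℝ)
    (hhstar : (fun ω => hstar (U ω)) =ᵐ[μ] μ[Y | MeasurableSpace.comap U inferInstance])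
    (hhstar2 : MemLp (fun ω => hstar (U ω)) 2 μ)
    (fstar : (Fin dX → ℝ) → ℝ)
    (hfstar : (fun ω => fstar (X ω))
      =ᵐ[μ] μ[fun ω => hstar (U ω) | MeasurableSpace.comap X inferInstance])
    (hfstar2 : MemLp (fun ω => fstar (X ω)) 2 μ)
    (F : Set ((Fin dX → ℝ) → ℝ)) (H : Set ((Fin dU → ℝ) → ℝ))
    (hF : ∀ f ∈ F, Measurable f ∧ MemLp (fun ω => f (X ω)) 2 μ)
    (hH : ∀ h ∈ H, Measurable h ∧ MemLp (fun ω => h (U ω)) 2 μ)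
    (hfstarF : fstar ∈ F) (hhstarH : hstar ∈ H)
    (w : ℝ) (hw : w ∈ Set.Ioo (0 : ℝ) 1) :
    (∫ ω, (fstar (X ω) - hstar (U ω)) ^ 2 ∂μ
        ≤ ⨅ p : F × H,
            (1 / w) * ∫ ω, ((p.1 : (Fin dX → ℝ) → ℝ) (X ω)
                - (p.2 : (Fin dU → ℝ) → ℝ) (U ω)) ^ 2 ∂μ
              + (1 / (1 - w)) * ∫ ω, ((p.2 : (Fin dU → ℝ) → ℝ) (U ω)
                - hstar (U ω)) ^ 2 ∂μ)
    ∧ (⨅ p : F × H,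
            (1 / w) * ∫ ω, ((p.1 : (Fin dX → ℝ) → ℝ) (X ω)
                - (p.2 : (Fin dU → ℝ) → ℝ) (U ω)) ^ 2 ∂μ
              + (1 / (1 - w)) * ∫ ω, ((p.2 : (Fin dU → ℝ) → ℝ) (U ω)
                - hstar (U ω)) ^ 2 ∂μ)
        ≤ (1 / w) * ∫ ω, (fstar (X ω) - hstar (U ω)) ^ 2 ∂μ :=
  Q_inf_sandwich_general μ X U hX hstar hhstar2 fstar hfstar F H hF hH hfstarF hhstarH w hw
end

section
/- Let (X, U, Y) be random variables with Y square-integrable, h*(u) := E[Y | U = u], and f*(x) := E[h*(U) | X = x]. Let ℱ be a set of measurable functions 𝒳 → ℝ with square-integrable f(X) containing f*, and ℋ a set of measurable functions 𝒰 → ℝ with square-integrable h(U) containing h*. Define J_w(f, h) := (1/w)·E[(f(X) − h(U))²] + (1/(1−w))·E[(h(U) − Y)²]. Suppose for each w ∈ (0, 1) there exists a minimizer (f_w, h_w) of J_w over ℱ × ℋ. Then E[(f_w(X) − f*(X))²] → 0 and E[(h_w(U) − h*(U))²] → 0 as w ↑ 1. -/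
/-!
Write `‖·‖` for the `L²(μ)` norm, `C = ‖f*(X) − h*(U)‖²` and `s = (1 − w)/w`. As `h_w(U)` is
`σ(U)`-measurable and `h*(U) = E[Y | U]`, Pythagoras gives
`‖h_w(U) − Y‖² = ‖h_w(U) − h*(U)‖² + ‖h*(U) − Y‖²`, so comparing `J_w(f_w, h_w) ≤ J_w(f*, h*)`
yields `(1 − w)‖f_w(X) − h_w(U)‖² + w‖h_w(U) − h*(U)‖² ≤ (1 − w) C`: hence
`‖h_w(U) − h*(U)‖² ≤ s C` and `‖f_w(X) − h_w(U)‖² ≤ C`. Pythagoras over `σ(X)` gives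
`‖f_w(X) − h*(U)‖² = ‖f_w(X) − f*(X)‖² + C`, and bounding the left side by the triangle inequality
through `h_w(U)` leaves `‖f_w(X) − f*(X)‖² ≤ (2√s + s) C`. Both bounds vanish as `w ↑ 1`.
-/

open MeasureTheory Filter Set

section Metric

variable {M : Type*} [PseudoMetricSpace M] {y f h f' h' : M}

theorem dist_sq_le_of_jointRisk_le {w : ℝ} (hw : w ∈ Ioo 0 1)
    (hpyth : dist h y ^ 2 = dist h h' ^ 2 + dist h' y ^ 2)
    (hmin : 1 / w * dist f h ^ 2 + 1 / (1 - w) * dist h y ^ 2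
      ≤ 1 / w * dist f' h' ^ 2 + 1 / (1 - w) * dist h' y ^ 2) :
    dist f h ^ 2 ≤ dist f' h' ^ 2 ∧ dist h h' ^ 2 ≤ (1 - w) / w * dist f' h' ^ 2 := by
  obtain ⟨hw0, hw1⟩ := hw
  have h1w : 0 < 1 - w := sub_pos.2 hw1
  have hcleared : (1 - w) * dist f h ^ 2 + w * dist h h' ^ 2 ≤ (1 - w) * dist f' h' ^ 2 := by
    rw [hpyth] at hmin
    have := mul_le_mul_of_nonneg_left hmin (mul_pos hw0 h1w).le
    field_simp at this
    linarith
  constructor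
  · nlinarith [sq_nonneg (dist h h')]
  · rw [div_mul_eq_mul_div, le_div_iff₀ hw0]
    nlinarith [sq_nonneg (dist f h)]

theorem dist_sq_le_of_dist_sq_eq_add {s : ℝ} (hs : 0 ≤ s)
    (hpyth : dist f h' ^ 2 = dist f f' ^ 2 + dist f' h' ^ 2)
    (hfh : dist f h ^ 2 ≤ dist f' h' ^ 2) (hhh : dist h h' ^ 2 ≤ s * dist f' h' ^ 2) :
    dist f f' ^ 2 ≤ (2 * √s + s) * dist f' h' ^ 2 := by
  have hfh' : dist f h ≤ dist f' h' :=
    (pow_le_pow_iff_left₀ dist_nonneg dist_nonneg two_ne_zero).1 hfh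
  have hhh' : dist h h' ≤ √s * dist f' h' := by
    rw [← Real.sqrt_sq dist_nonneg, ← Real.sqrt_sq (dist_nonneg : 0 ≤ dist f' h'),
      ← Real.sqrt_mul hs]
    exact Real.sqrt_le_sqrt hhh
  have htri : dist f h' ≤ (1 + √s) * dist f' h' := by
    linarith [dist_triangle f h h']
  calc dist f f' ^ 2 = dist f h' ^ 2 - dist f' h' ^ 2 := by rw [hpyth]; ring
    _ ≤ ((1 + √s) * dist f' h') ^ 2 - dist f' h' ^ 2 := by gcongr
    _ = (2 * √s + s) * dist f' h' ^ 2 := by rw [mul_pow, add_sq, Real.sq_sqrt hs]; ring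

end Metric

section L2

variable {Ω : Type*} {m mU mX m₀ : MeasurableSpace Ω} {μ : Measure Ω}

theorem MemLp.dist_toLp_toLp_sq {f g : Ω → ℝ} (hf : MemLp f 2 μ) (hg : MemLp g 2 μ) :
    dist (hf.toLp f) (hg.toLp g) ^ 2 = ∫ ω, (f ω - g ω) ^ 2 ∂μ := by
  rw [dist_eq_norm, ← hf.toLp_sub hg, ← real_inner_self_eq_norm_sq, L2.inner_def]
  refine integral_congr_ae ((hf.sub hg).coeFn_toLp.mono fun ω hω => ?_)
  simp [hω, sq]

variable [IsFiniteMeasure μ]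

theorem integral_mul_sub_eq_zero_of_ae_eq_condExp (hm : m ≤ m₀) {g Z W : Ω → ℝ}
    (hgm : StronglyMeasurable[m] g) (hg : MemLp g 2 μ) (hZ : MemLp Z 2 μ)
    (hW : W =ᵐ[μ] μ[Z|m]) :
    ∫ ω, g ω * (Z ω - W ω) ∂μ = 0 := by
  have hgZ : Integrable (g * Z) μ := hg.integrable_mul hZ
  have hpull : μ[g * Z|m] =ᵐ[μ] g * W :=
    (condExp_mul_of_stronglyMeasurable_left hgm hgZ (hZ.integrable one_le_two)).trans
      (EventuallyEq.rfl.mul hW.symm)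
  have hgW : Integrable (g * W) μ := integrable_condExp.congr hpull
  calc ∫ ω, g ω * (Z ω - W ω) ∂μ = ∫ ω, (g * Z) ω ∂μ - ∫ ω, (g * W) ω ∂μ := by
        simp_rw [mul_sub]; exact integral_sub hgZ hgW
    _ = 0 := by rw [← integral_congr_ae hpull, integral_condExp hm, sub_self]

theorem integral_sq_sub_eq_add_of_ae_eq_condExp (hm : m ≤ m₀) {V W Z : Ω → ℝ}
    (hVm : StronglyMeasurable[m] V) (hV : MemLp V 2 μ) (hWm : StronglyMeasurable[m] W)
    (hW : MemLp W 2 μ) (hZ : MemLp Z 2 μ) (hWZ : W =ᵐ[μ] μ[Z|m]) :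
    ∫ ω, (V ω - Z ω) ^ 2 ∂μ = ∫ ω, (V ω - W ω) ^ 2 ∂μ + ∫ ω, (W ω - Z ω) ^ 2 ∂μ := by
  have horth : ∫ ω, (V ω - W ω) * (Z ω - W ω) ∂μ = 0 :=
    integral_mul_sub_eq_zero_of_ae_eq_condExp hm (hVm.sub hWm) (hV.sub hW) hZ hWZ
  have hVW : Integrable (fun ω => (V ω - W ω) ^ 2) μ := (hV.sub hW).integrable_sq
  have hWZ' : Integrable (fun ω => (W ω - Z ω) ^ 2) μ := (hW.sub hZ).integrable_sq
  have hcross : Integrable (fun ω => 2 * ((V ω - W ω) * (Z ω - W ω))) μ :=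
    ((hV.sub hW).integrable_mul (hZ.sub hW)).const_mul 2
  calc ∫ ω, (V ω - Z ω) ^ 2 ∂μ
      = ∫ ω, ((V ω - W ω) ^ 2 + (W ω - Z ω) ^ 2) - 2 * ((V ω - W ω) * (Z ω - W ω)) ∂μ := by
        congr 1; ext ω; ring
    _ = ∫ ω, (V ω - W ω) ^ 2 ∂μ + ∫ ω, (W ω - Z ω) ^ 2 ∂μ := by
        rw [integral_sub (by exact hVW.add hWZ') hcross, integral_add hVW hWZ',
          integral_const_mul, horth, mul_zero, sub_zero]

theorem integral_sq_sub_le_of_jointRisk_le (hmU : mU ≤ m₀) (hmX : mX ≤ m₀) {w : ℝ}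
    (hw : w ∈ Ioo 0 1) {Y h' f' f h : Ω → ℝ} (hY : MemLp Y 2 μ)
    (hh'm : StronglyMeasurable[mU] h') (hh' : MemLp h' 2 μ) (hh'Y : h' =ᵐ[μ] μ[Y|mU])
    (hf'm : StronglyMeasurable[mX] f') (hf' : MemLp f' 2 μ) (hf'h' : f' =ᵐ[μ] μ[h'|mX])
    (hfm : StronglyMeasurable[mX] f) (hf : MemLp f 2 μ)
    (hhm : StronglyMeasurable[mU] h) (hh : MemLp h 2 μ)
    (hmin : 1 / w * ∫ ω, (f ω - h ω) ^ 2 ∂μ + 1 / (1 - w) * ∫ ω, (h ω - Y ω) ^ 2 ∂μ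
      ≤ 1 / w * ∫ ω, (f' ω - h' ω) ^ 2 ∂μ + 1 / (1 - w) * ∫ ω, (h' ω - Y ω) ^ 2 ∂μ) :
    ∫ ω, (f ω - f' ω) ^ 2 ∂μ ≤ (2 * √((1 - w) / w) + (1 - w) / w) * ∫ ω, (f' ω - h' ω) ^ 2 ∂μ
    ∧ ∫ ω, (h ω - h' ω) ^ 2 ∂μ ≤ (1 - w) / w * ∫ ω, (f' ω - h' ω) ^ 2 ∂μ := by
  have hpythU := integral_sq_sub_eq_add_of_ae_eq_condExp hmU hhm hh hh'm hh' hY hh'Y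
  have hpythX := integral_sq_sub_eq_add_of_ae_eq_condExp hmX hfm hf hf'm hf' hh' hf'h'
  -- Pass to distances in `Lp ℝ 2 μ`, where the triangle inequality is available.
  simp only [← MemLp.dist_toLp_toLp_sq hf hh, ← MemLp.dist_toLp_toLp_sq hh hY,
    ← MemLp.dist_toLp_toLp_sq hf' hh', ← MemLp.dist_toLp_toLp_sq hh' hY,
    ← MemLp.dist_toLp_toLp_sq hh hh', ← MemLp.dist_toLp_toLp_sq hf hf',
    ← MemLp.dist_toLp_toLp_sq hf hh'] at hmin hpythU hpythX ⊢
  obtain ⟨hfh, hhh⟩ := dist_sq_le_of_jointRisk_le hw hpythU hmin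
  exact ⟨dist_sq_le_of_dist_sq_eq_add (div_nonneg (sub_pos.2 hw.2).le hw.1.le) hpythX hfh hhh, hhh⟩

end L2

theorem jointRR_tendsto_twoStepRR_general
    {Ω : Type*} [MeasurableSpace Ω] (μ : Measure Ω) [IsProbabilityMeasure μ]
    {dX dU : ℕ}
    (X : Ω → (Fin dX → ℝ)) (U : Ω → (Fin dU → ℝ)) (Y : Ω → ℝ)
    (hX : Measurable X) (hU : Measurable U)
    (hY2 : MemLp Y 2 μ)
    (hstar : (Fin dU → ℝ) → ℝ)
    (hhstar : (fun ω => hstar (U ω)) =ᵐ[μ] μ[Y | MeasurableSpace.comap U inferInstance])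
    (hhstar2 : MemLp (fun ω => hstar (U ω)) 2 μ)
    (fstar : (Fin dX → ℝ) → ℝ)
    (hfstar : (fun ω => fstar (X ω))
      =ᵐ[μ] μ[fun ω => hstar (U ω) | MeasurableSpace.comap X inferInstance])
    (hfstar2 : MemLp (fun ω => fstar (X ω)) 2 μ)
    (F : Set ((Fin dX → ℝ) → ℝ)) (H : Set ((Fin dU → ℝ) → ℝ))
    (hF : ∀ f ∈ F, Measurable f ∧ MemLp (fun ω => f (X ω)) 2 μ)
    (hH : ∀ h ∈ H, Measurable h ∧ MemLp (fun ω => h (U ω)) 2 μ)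
    (hfstarF : fstar ∈ F) (hhstarH : hstar ∈ H)
    (fw : ℝ → (Fin dX → ℝ) → ℝ) (hw : ℝ → (Fin dU → ℝ) → ℝ)
    (hmem : ∀ w ∈ Set.Ioo (0 : ℝ) 1, fw w ∈ F ∧ hw w ∈ H)
    (hmin : ∀ w ∈ Set.Ioo (0 : ℝ) 1, ∀ f ∈ F, ∀ h ∈ H,
      (1 / w) * ∫ ω, (fw w (X ω) - hw w (U ω)) ^ 2 ∂μ
          + (1 / (1 - w)) * ∫ ω, (hw w (U ω) - Y ω) ^ 2 ∂μ
        ≤ (1 / w) * ∫ ω, (f (X ω) - h (U ω)) ^ 2 ∂μ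
          + (1 / (1 - w)) * ∫ ω, (h (U ω) - Y ω) ^ 2 ∂μ) :
    Tendsto (fun w => ∫ ω, (fw w (X ω) - fstar (X ω)) ^ 2 ∂μ)
        (nhdsWithin 1 (Set.Ioo (0 : ℝ) 1)) (nhds 0)
    ∧ Tendsto (fun w => ∫ ω, (hw w (U ω) - hstar (U ω)) ^ 2 ∂μ)
        (nhdsWithin 1 (Set.Ioo (0 : ℝ) 1)) (nhds 0) := by
  have hXm : ∀ f ∈ F, StronglyMeasurable[MeasurableSpace.comap X inferInstance] (f ∘ X) :=
    fun f hf => ((hF f hf).1.comp (comap_measurable X)).stronglyMeasurable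
  have hUm : ∀ h ∈ H, StronglyMeasurable[MeasurableSpace.comap U inferInstance] (h ∘ U) :=
    fun h hh => ((hH h hh).1.comp (comap_measurable U)).stronglyMeasurable
  have hbound := fun w (hwI : w ∈ Ioo (0 : ℝ) 1) =>
    integral_sq_sub_le_of_jointRisk_le hU.comap_le hX.comap_le hwI hY2 (hUm _ hhstarH) hhstar2
      hhstar (hXm _ hfstarF) hfstar2 hfstar (hXm _ (hmem w hwI).1) (hF _ (hmem w hwI).1).2
      (hUm _ (hmem w hwI).2) (hH _ (hmem w hwI).2).2 (hmin w hwI fstar hfstarF hstar hhstarH)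
  set C := ∫ ω, (fstar (X ω) - hstar (U ω)) ^ 2 ∂μ
  have hratio : Tendsto (fun w : ℝ => (1 - w) / w) (nhdsWithin 1 (Ioo 0 1)) (nhds 0) := by
    have : ContinuousAt (fun w : ℝ => (1 - w) / w) 1 := by fun_prop (disch := norm_num)
    simpa using this.tendsto.mono_left nhdsWithin_le_nhds
  have hnonneg : ∀ g : Ω → ℝ, 0 ≤ ∫ ω, g ω ^ 2 ∂μ := fun g => integral_nonneg fun ω => sq_nonneg _
  refine ⟨squeeze_zero' (Eventually.of_forall fun w => hnonneg _)
    (eventually_nhdsWithin_of_forall fun w hwI => (hbound w hwI).1) ?_,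
    squeeze_zero' (Eventually.of_forall fun w => hnonneg _)
    (eventually_nhdsWithin_of_forall fun w hwI => (hbound w hwI).2) ?_⟩
  · simpa using ((hratio.sqrt.const_mul 2).add hratio).mul_const C
  · simpa using hratio.mul_const C

/-- Theorem 3 of the paper: Joint-RR converges to 2Step-RR as `w ↑ 1`.
With `h*(u) := E[Y | U = u]`, `f*(x) := E[h*(U) | X = x]`, `f* ∈ ℱ`, `h* ∈ ℋ`, if
`(f_w, h_w)` minimizes `J_w(f, h) := (1/w)·E[(f(X) − h(U))²] + (1/(1−w))·E[(h(U) − Y)²]`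
over `ℱ × ℋ` for each `w ∈ (0,1)`, then `E[(f_w(X) − f*(X))²] → 0` and
`E[(h_w(U) − h*(U))²] → 0` as `w ↑ 1`. -/
theorem jointRR_tendsto_twoStepRR
    {Ω : Type*} [MeasurableSpace Ω] (μ : Measure Ω) [IsProbabilityMeasure μ]
    {dX dU : ℕ}
    (X : Ω → (Fin dX → ℝ)) (U : Ω → (Fin dU → ℝ)) (Y : Ω → ℝ)
    (hX : Measurable X) (hU : Measurable U) (hY : Measurable Y)
    (hY2 : MemLp Y 2 μ)
    (hstar : (Fin dU → ℝ) → ℝ)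
    (hhstar : (fun ω => hstar (U ω)) =ᵐ[μ] μ[Y | MeasurableSpace.comap U inferInstance])
    (hhstar2 : MemLp (fun ω => hstar (U ω)) 2 μ)
    (fstar : (Fin dX → ℝ) → ℝ)
    (hfstar : (fun ω => fstar (X ω))
      =ᵐ[μ] μ[fun ω => hstar (U ω) | MeasurableSpace.comap X inferInstance])
    (hfstar2 : MemLp (fun ω => fstar (X ω)) 2 μ)
    (F : Set ((Fin dX → ℝ) → ℝ)) (H : Set ((Fin dU → ℝ) → ℝ))
    (hF : ∀ f ∈ F, Measurable f ∧ MemLp (fun ω => f (X ω)) 2 μ)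
    (hH : ∀ h ∈ H, Measurable h ∧ MemLp (fun ω => h (U ω)) 2 μ)
    (hfstarF : fstar ∈ F) (hhstarH : hstar ∈ H)
    (fw : ℝ → (Fin dX → ℝ) → ℝ) (hw : ℝ → (Fin dU → ℝ) → ℝ)
    (hmem : ∀ w ∈ Set.Ioo (0 : ℝ) 1, fw w ∈ F ∧ hw w ∈ H)
    (hmin : ∀ w ∈ Set.Ioo (0 : ℝ) 1, ∀ f ∈ F, ∀ h ∈ H,
      (1 / w) * ∫ ω, (fw w (X ω) - hw w (U ω)) ^ 2 ∂μ
          + (1 / (1 - w)) * ∫ ω, (hw w (U ω) - Y ω) ^ 2 ∂μ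
        ≤ (1 / w) * ∫ ω, (f (X ω) - h (U ω)) ^ 2 ∂μ
          + (1 / (1 - w)) * ∫ ω, (h (U ω) - Y ω) ^ 2 ∂μ) :
    Tendsto (fun w => ∫ ω, (fw w (X ω) - fstar (X ω)) ^ 2 ∂μ)
        (nhdsWithin 1 (Set.Ioo (0 : ℝ) 1)) (nhds 0)
    ∧ Tendsto (fun w => ∫ ω, (hw w (U ω) - hstar (U ω)) ^ 2 ∂μ)
        (nhdsWithin 1 (Set.Ioo (0 : ℝ) 1)) (nhds 0) :=
  jointRR_tendsto_twoStepRR_general μ X U Y hX hU hY2 hstar hhstar hhstar2 fstar hfstar hfstar2 F H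
    hF hH hfstarF hhstarH fw hw hmem hmin
end

section
/- Let (X, U, Y) be random variables with Y square-integrable, let f : 𝒳 → ℝ with f(X) square-integrable, let w ∈ (0, 1), and define h°(u) := w·E[Y | U = u] + (1−w)·E[f(X) | U = u]. Then for every measurable h : 𝒰 → ℝ with h(U) square-integrable, J_w(f, h) − J_w(f, h°) = (1/(w(1−w)))·E[(h(U) − h°(U))²]. In particular, h° minimizes h ↦ J_w(f, h) over all square-integrable h. -/
/-!
Write `H = h(U)`, `C = h°(U)` and `V = w Y + (1 - w) f(X)`, so that `C = E[V | U]`. Expanding the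
squares around `C`, the difference `J_w(f, h) - J_w(f, h°)` is `1/(w(1-w))` times
`E[(H - C)²] + 2 E[(H - C)(C - V)]`. The cross term vanishes because `H - C` is a square-integrable
function of `U` and `C - V` is orthogonal to all of these.
-/

open MeasureTheory

section

variable {Ω : Type*} {m m₀ : MeasurableSpace Ω} {μ : Measure Ω}

theorem integral_mul_condExp_sub_eq_zero [IsFiniteMeasure μ] (hm : m ≤ m₀) {g V : Ω → ℝ}
    (hgm : AEStronglyMeasurable[m] g μ) (hg : MemLp g 2 μ) (hV : MemLp V 2 μ) :
    ∫ ω, g ω * (μ[V | m] ω - V ω) ∂μ = 0 := by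
  have hgV : Integrable (g * V) μ := hg.integrable_mul hV
  have pull_out : μ[g * V | m] =ᵐ[μ] g * μ[V | m] :=
    condExp_mul_of_aestronglyMeasurable_left hgm hgV (hV.integrable one_le_two)
  calc ∫ ω, g ω * (μ[V | m] ω - V ω) ∂μ = ∫ ω, μ[g * V | m] ω - (g * V) ω ∂μ := by
        refine integral_congr_ae ?_
        filter_upwards [pull_out] with ω hω
        rw [hω, Pi.mul_apply, Pi.mul_apply, mul_sub]
    _ = ∫ ω, μ[g * V | m] ω ∂μ - ∫ ω, (g * V) ω ∂μ := integral_sub integrable_condExp hgV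
    _ = 0 := by rw [integral_condExp hm, sub_self]

/-- The paper's `J_w(f, h)`, written for the random variables `F = f(X)` and `H = h(U)`. -/
noncomputable def jointRisk (μ : Measure Ω) (w : ℝ) (F H Y : Ω → ℝ) : ℝ :=
  (1 / w) * ∫ ω, (F ω - H ω) ^ 2 ∂μ + (1 / (1 - w)) * ∫ ω, (H ω - Y ω) ^ 2 ∂μ

theorem jointLoss_sub_jointLoss {w : ℝ} (hw₀ : w ≠ 0) (hw₁ : w ≠ 1) (f h c y : ℝ) :
    (1 / w) * (f - h) ^ 2 + (1 / (1 - w)) * (h - y) ^ 2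
        - ((1 / w) * (f - c) ^ 2 + (1 / (1 - w)) * (c - y) ^ 2)
      = 1 / (w * (1 - w)) * ((h - c) ^ 2 + 2 * ((h - c) * (c - (w * y + (1 - w) * f)))) := by
  have : 1 - w ≠ 0 := sub_ne_zero.mpr hw₁.symm
  field_simp
  ring

theorem jointRisk_sub_jointRisk {w : ℝ} (hw₀ : w ≠ 0) (hw₁ : w ≠ 1) {F H C Y : Ω → ℝ}
    (hF : MemLp F 2 μ) (hH : MemLp H 2 μ) (hC : MemLp C 2 μ) (hY : MemLp Y 2 μ) :
    jointRisk μ w F H Y - jointRisk μ w F C Y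
      = 1 / (w * (1 - w)) * (∫ ω, (H ω - C ω) ^ 2 ∂μ
          + 2 * ∫ ω, (H ω - C ω) * (C ω - (w * Y ω + (1 - w) * F ω)) ∂μ) := by
  have sq_int {A B : Ω → ℝ} (hA : MemLp A 2 μ) (hB : MemLp B 2 μ) (c : ℝ) :
      Integrable (fun ω => c * (A ω - B ω) ^ 2) μ :=
    (hA.sub hB).integrable_sq.const_mul c
  have hHC : MemLp (fun ω => H ω - C ω) 2 μ := hH.sub hC
  have hCV : MemLp (fun ω => C ω - (w * Y ω + (1 - w) * F ω)) 2 μ :=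
    hC.sub ((hY.const_mul w).add (hF.const_mul (1 - w)))
  calc jointRisk μ w F H Y - jointRisk μ w F C Y
      = ∫ ω, (1 / w) * (F ω - H ω) ^ 2 + (1 / (1 - w)) * (H ω - Y ω) ^ 2
          - ((1 / w) * (F ω - C ω) ^ 2 + (1 / (1 - w)) * (C ω - Y ω) ^ 2) ∂μ := by
        have hH' : Integrable (fun ω => (1 / w) * (F ω - H ω) ^ 2
            + (1 / (1 - w)) * (H ω - Y ω) ^ 2) μ := (sq_int hF hH _).add (sq_int hH hY _)
        have hC' : Integrable (fun ω => (1 / w) * (F ω - C ω) ^ 2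
            + (1 / (1 - w)) * (C ω - Y ω) ^ 2) μ := (sq_int hF hC _).add (sq_int hC hY _)
        rw [integral_sub hH' hC', integral_add (sq_int hF hH _) (sq_int hH hY _),
          integral_add (sq_int hF hC _) (sq_int hC hY _)]
        simp only [jointRisk, integral_const_mul]
    _ = ∫ ω, 1 / (w * (1 - w)) * ((H ω - C ω) ^ 2
          + 2 * ((H ω - C ω) * (C ω - (w * Y ω + (1 - w) * F ω)))) ∂μ :=
        integral_congr_ae (.of_forall fun ω => jointLoss_sub_jointLoss hw₀ hw₁ _ _ _ _)
    _ = _ := by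
        have hcross : Integrable (fun ω => 2 * ((H ω - C ω)
            * (C ω - (w * Y ω + (1 - w) * F ω)))) μ := (hHC.integrable_mul hCV).const_mul 2
        rw [integral_const_mul, integral_add hHC.integrable_sq hcross, integral_const_mul]

theorem jointRisk_sub_jointRisk_of_ae_eq_condExp [IsFiniteMeasure μ] (hm : m ≤ m₀) {w : ℝ}
    (hw₀ : w ≠ 0) (hw₁ : w ≠ 1) {F H C Y : Ω → ℝ} (hF : MemLp F 2 μ) (hY : MemLp Y 2 μ)
    (hH : MemLp H 2 μ) (hHm : AEStronglyMeasurable[m] H μ)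
    (hC : C =ᵐ[μ] fun ω => w * μ[Y | m] ω + (1 - w) * μ[F | m] ω) :
    jointRisk μ w F H Y - jointRisk μ w F C Y = 1 / (w * (1 - w)) * ∫ ω, (H ω - C ω) ^ 2 ∂μ := by
  set V : Ω → ℝ := fun ω => w * Y ω + (1 - w) * F ω
  have hV : MemLp V 2 μ := (hY.const_mul w).add (hF.const_mul (1 - w))
  have hV_condExp : μ[V | m] =ᵐ[μ] fun ω => w * μ[Y | m] ω + (1 - w) * μ[F | m] ω := by
    filter_upwards [condExp_add ((hY.integrable one_le_two).smul w)
        ((hF.integrable one_le_two).smul (1 - w)) m,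
      condExp_smul w Y m, condExp_smul (1 - w) F m] with ω hsum hY_smul hF_smul
    change μ[w • Y + (1 - w) • F | m] ω = _
    rw [hsum, Pi.add_apply, hY_smul, hF_smul]
    rfl
  have hCV : C =ᵐ[μ] μ[V | m] := hC.trans hV_condExp.symm
  have hC₂ : MemLp C 2 μ := (hV.condExp one_le_two).ae_eq hCV.symm
  have hCm : AEStronglyMeasurable[m] C μ :=
    stronglyMeasurable_condExp.aestronglyMeasurable.congr hCV.symm
  have cross : ∫ ω, (H ω - C ω) * (C ω - V ω) ∂μ = 0 := by
    rw [← integral_mul_condExp_sub_eq_zero hm (hHm.sub hCm) (hH.sub hC₂) hV]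
    refine integral_congr_ae ?_
    filter_upwards [hCV] with ω hω
    rw [Pi.sub_apply, ← hω]
  rw [jointRisk_sub_jointRisk hw₀ hw₁ hF hH hC₂ hY, cross, mul_zero, add_zero]

end

theorem Jw_inner_optimum_general
    {Ω : Type*} [MeasurableSpace Ω] (μ : Measure Ω) [IsProbabilityMeasure μ]
    {dX dU : ℕ}
    (X : Ω → (Fin dX → ℝ)) (U : Ω → (Fin dU → ℝ)) (Y : Ω → ℝ)
    (hU : Measurable U)
    (hY2 : MemLp Y 2 μ)
    (f : (Fin dX → ℝ) → ℝ)
    (hfX : MemLp (fun ω => f (X ω)) 2 μ)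
    (w : ℝ) (hw : w ∈ Set.Ioo (0 : ℝ) 1)
    (hcirc : (Fin dU → ℝ) → ℝ)
    (hcirc_def : (fun ω => hcirc (U ω))
      =ᵐ[μ] fun ω =>
        w * (μ[Y | MeasurableSpace.comap U inferInstance]) ω
          + (1 - w) * (μ[fun ω' => f (X ω') | MeasurableSpace.comap U inferInstance]) ω) :
    ∀ h : (Fin dU → ℝ) → ℝ, Measurable h → MemLp (fun ω => h (U ω)) 2 μ →
      (((1 / w) * ∫ ω, (f (X ω) - h (U ω)) ^ 2 ∂μ
            + (1 / (1 - w)) * ∫ ω, (h (U ω) - Y ω) ^ 2 ∂μ)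
          - ((1 / w) * ∫ ω, (f (X ω) - hcirc (U ω)) ^ 2 ∂μ
            + (1 / (1 - w)) * ∫ ω, (hcirc (U ω) - Y ω) ^ 2 ∂μ)
        = (1 / (w * (1 - w))) * ∫ ω, (h (U ω) - hcirc (U ω)) ^ 2 ∂μ)
      ∧ ((1 / w) * ∫ ω, (f (X ω) - hcirc (U ω)) ^ 2 ∂μ
            + (1 / (1 - w)) * ∫ ω, (hcirc (U ω) - Y ω) ^ 2 ∂μ
          ≤ (1 / w) * ∫ ω, (f (X ω) - h (U ω)) ^ 2 ∂μ
            + (1 / (1 - w)) * ∫ ω, (h (U ω) - Y ω) ^ 2 ∂μ) := by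
  obtain ⟨hw₀, hw₁⟩ := hw
  intro h hh hh₂
  have hHm : AEStronglyMeasurable[MeasurableSpace.comap U inferInstance] (fun ω => h (U ω)) μ :=
    (hh.comp (comap_measurable U)).stronglyMeasurable.aestronglyMeasurable
  have key := jointRisk_sub_jointRisk_of_ae_eq_condExp hU.comap_le hw₀.ne' hw₁.ne hfX hY2 hh₂
    hHm hcirc_def
  have gap_nonneg : 0 ≤ 1 / (w * (1 - w)) * ∫ ω, (h (U ω) - hcirc (U ω)) ^ 2 ∂μ :=
    mul_nonneg (one_div_nonneg.mpr (mul_pos hw₀ (sub_pos.mpr hw₁)).le)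
      (integral_nonneg fun ω => sq_nonneg _)
  exact ⟨key, sub_nonneg.mp (key ▸ gap_nonneg)⟩

/-- the optimal inner function of Joint-RR.
With `h°(u) := w·E[Y | U = u] + (1−w)·E[f(X) | U = u]`, for every measurable
square-integrable `h`:
`J_w(f, h) − J_w(f, h°) = (1/(w(1−w)))·E[(h(U) − h°(U))²]`;
in particular `h°` minimizes `h ↦ J_w(f, h)`. -/
theorem Jw_inner_optimum
    {Ω : Type*} [MeasurableSpace Ω] (μ : Measure Ω) [IsProbabilityMeasure μ]
    {dX dU : ℕ}
    (X : Ω → (Fin dX → ℝ)) (U : Ω → (Fin dU → ℝ)) (Y : Ω → ℝ)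
    (hX : Measurable X) (hU : Measurable U) (hY : Measurable Y)
    (hY2 : MemLp Y 2 μ)
    (f : (Fin dX → ℝ) → ℝ) (hf : Measurable f)
    (hfX : MemLp (fun ω => f (X ω)) 2 μ)
    (w : ℝ) (hw : w ∈ Set.Ioo (0 : ℝ) 1)
    (hcirc : (Fin dU → ℝ) → ℝ) (hhcirc : Measurable hcirc)
    (hhcirc2 : MemLp (fun ω => hcirc (U ω)) 2 μ)
    (hcirc_def : (fun ω => hcirc (U ω))
      =ᵐ[μ] fun ω =>
        w * (μ[Y | MeasurableSpace.comap U inferInstance]) ω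
          + (1 - w) * (μ[fun ω' => f (X ω') | MeasurableSpace.comap U inferInstance]) ω) :
    ∀ h : (Fin dU → ℝ) → ℝ, Measurable h → MemLp (fun ω => h (U ω)) 2 μ →
      (((1 / w) * ∫ ω, (f (X ω) - h (U ω)) ^ 2 ∂μ
            + (1 / (1 - w)) * ∫ ω, (h (U ω) - Y ω) ^ 2 ∂μ)
          - ((1 / w) * ∫ ω, (f (X ω) - hcirc (U ω)) ^ 2 ∂μ
            + (1 / (1 - w)) * ∫ ω, (hcirc (U ω) - Y ω) ^ 2 ∂μ)
        = (1 / (w * (1 - w))) * ∫ ω, (h (U ω) - hcirc (U ω)) ^ 2 ∂μ)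
      ∧ ((1 / w) * ∫ ω, (f (X ω) - hcirc (U ω)) ^ 2 ∂μ
            + (1 / (1 - w)) * ∫ ω, (hcirc (U ω) - Y ω) ^ 2 ∂μ
          ≤ (1 / w) * ∫ ω, (f (X ω) - h (U ω)) ^ 2 ∂μ
            + (1 / (1 - w)) * ∫ ω, (h (U ω) - Y ω) ^ 2 ∂μ) :=
  Jw_inner_optimum_general μ X U Y hU hY2 f hfX w hw hcirc hcirc_def
end

section
/- Let (X, U, Y) be random variables with Y square-integrable and suppose the conditional mean independence condition E[Y | U] = E[Y | U, X] almost surely holds. Then for every measurable f : 𝒳 → ℝ with f(X) square-integrable, E[(Y − f(X))²] = E[(E[Y | U] − f(X))²] + E[(Y − E[Y | U])²]. -/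
/-!
Write `Z = E[Y | U]`. Then `Y - f(X) = (Z - f(X)) + (Y - Z)`, and `Z - f(X)` is measurable with
respect to `σ(U, X)`. By conditional mean independence `Y - Z = Y - E[Y | U, X]` a.s., which is
orthogonal in `L²` to every square-integrable `σ(U, X)`-measurable function, so the cross term
vanishes and the decomposition is Pythagoras' theorem.
-/

open MeasureTheory

section

variable {Ω : Type*} {m m₀ : MeasurableSpace Ω} {μ : Measure Ω}

lemma integral_add_sq_of_integral_mul_eq_zero {a b : Ω → ℝ} (ha : MemLp a 2 μ)
    (hb : MemLp b 2 μ) (hab : ∫ ω, a ω * b ω ∂μ = 0) :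
    ∫ ω, (a ω + b ω) ^ 2 ∂μ = ∫ ω, a ω ^ 2 ∂μ + ∫ ω, b ω ^ 2 ∂μ := by
  have ha_int : Integrable (fun ω => a ω ^ 2) μ := ha.integrable_sq
  have hb_int : Integrable (fun ω => b ω ^ 2) μ := hb.integrable_sq
  have hab_sq_int : Integrable (fun ω => a ω ^ 2 + b ω ^ 2) μ := ha_int.add hb_int
  have hab_int : Integrable (fun ω => 2 * (a ω * b ω)) μ := (ha.integrable_mul hb).const_mul 2
  calc ∫ ω, (a ω + b ω) ^ 2 ∂μ
      = ∫ ω, (a ω ^ 2 + b ω ^ 2 + 2 * (a ω * b ω)) ∂μ := by congr 1; ext ω; ring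
    _ = ∫ ω, a ω ^ 2 ∂μ + ∫ ω, b ω ^ 2 ∂μ + 2 * ∫ ω, a ω * b ω ∂μ := by
      rw [integral_add hab_sq_int hab_int, integral_add ha_int hb_int,
        integral_const_mul]
    _ = ∫ ω, a ω ^ 2 ∂μ + ∫ ω, b ω ^ 2 ∂μ := by rw [hab, mul_zero, add_zero]

lemma integral_mul_sub_condExp_eq_zero [IsFiniteMeasure μ] (hm : m ≤ m₀) {g Y : Ω → ℝ}
    (hg : StronglyMeasurable[m] g) (hg2 : MemLp g 2 μ) (hY2 : MemLp Y 2 μ) :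
    ∫ ω, g ω * (Y ω - μ[Y|m] ω) ∂μ = 0 := by
  have hgY : Integrable (fun ω => g ω * Y ω) μ := hg2.integrable_mul hY2
  have hgZ : Integrable (fun ω => g ω * μ[Y|m] ω) μ := hg2.integrable_mul (hY2.condExp one_le_two)
  have h_pull : ∫ ω, g ω * Y ω ∂μ = ∫ ω, g ω * μ[Y|m] ω ∂μ := by
    rw [← integral_condExp hm]
    exact integral_congr_ae
      (condExp_mul_of_stronglyMeasurable_left hg hgY (hY2.integrable one_le_two))
  simp only [mul_sub]
  rw [integral_sub hgY hgZ, sub_eq_zero]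
  exact h_pull

theorem integral_sq_sub_eq_of_condExp_ae_eq [IsFiniteMeasure μ] {mU : MeasurableSpace Ω}
    (hmU : mU ≤ m) (hm : m ≤ m₀) {Y F : Ω → ℝ} (hY2 : MemLp Y 2 μ) (hF2 : MemLp F 2 μ)
    (hF : StronglyMeasurable[m] F) (hCMI : μ[Y|mU] =ᵐ[μ] μ[Y|m]) :
    ∫ ω, (Y ω - F ω) ^ 2 ∂μ
      = ∫ ω, (μ[Y|mU] ω - F ω) ^ 2 ∂μ + ∫ ω, (Y ω - μ[Y|mU] ω) ^ 2 ∂μ := by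
  set Z := μ[Y|mU]
  have hZ2 : MemLp Z 2 μ := hY2.condExp one_le_two
  have hZF : StronglyMeasurable[m] (fun ω => Z ω - F ω) :=
    (stronglyMeasurable_condExp.mono hmU).sub hF
  have h_cross : ∫ ω, (Z ω - F ω) * (Y ω - Z ω) ∂μ = 0 := by
    rw [← integral_mul_sub_condExp_eq_zero hm hZF (hZ2.sub hF2) hY2]
    refine integral_congr_ae ?_
    filter_upwards [hCMI] with ω hω
    rw [hω]
  calc ∫ ω, (Y ω - F ω) ^ 2 ∂μ = ∫ ω, ((Z ω - F ω) + (Y ω - Z ω)) ^ 2 ∂μ := by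
        congr 1; ext ω; ring
    _ = _ := integral_add_sq_of_integral_mul_eq_zero (hZ2.sub hF2) (hY2.sub hZ2) h_cross

end

theorem mse_decomposition_of_cond_mean_indep_general
    {Ω : Type*} [MeasurableSpace Ω] (μ : Measure Ω) [IsProbabilityMeasure μ]
    {dX dU : ℕ}
    (X : Ω → (Fin dX → ℝ)) (U : Ω → (Fin dU → ℝ)) (Y : Ω → ℝ)
    (hX : Measurable X) (hU : Measurable U)
    (hY2 : MemLp Y 2 μ)
    (hCMI : μ[Y | MeasurableSpace.comap U inferInstance]
      =ᵐ[μ] μ[Y | MeasurableSpace.comap (fun ω => (U ω, X ω)) inferInstance]) :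
    ∀ f : (Fin dX → ℝ) → ℝ, Measurable f → MemLp (fun ω => f (X ω)) 2 μ →
      ∫ ω, (Y ω - f (X ω)) ^ 2 ∂μ
        = (∫ ω, ((μ[Y | MeasurableSpace.comap U inferInstance]) ω - f (X ω)) ^ 2 ∂μ)
          + ∫ ω, (Y ω - (μ[Y | MeasurableSpace.comap U inferInstance]) ω) ^ 2 ∂μ := by
  intro f hf hf2
  have h_comap := MeasurableSpace.comap_prodMk (mβ := inferInstance) (mγ := inferInstance) U X
  have hU_le : MeasurableSpace.comap U inferInstance
      ≤ MeasurableSpace.comap (fun ω => (U ω, X ω)) inferInstance :=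
    h_comap ▸ le_sup_left
  have hfX : StronglyMeasurable[MeasurableSpace.comap (fun ω => (U ω, X ω)) inferInstance]
      (fun ω => f (X ω)) :=
    ((hf.comp (comap_measurable X)).mono (h_comap ▸ le_sup_right) le_rfl).stronglyMeasurable
  exact integral_sq_sub_eq_of_condExp_ae_eq hU_le (hU.prodMk hX).comap_le hY2 hf2 hfX hCMI

/-- MSE decomposition under conditional mean independence, Section 5.3.
If `E[Y | U] = E[Y | U, X]` a.s., then for every measurable square-integrable `f`,
`E[(Y − f(X))²] = E[(E[Y|U] − f(X))²] + E[(Y − E[Y|U])²]`. -/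
theorem mse_decomposition_of_cond_mean_indep
    {Ω : Type*} [MeasurableSpace Ω] (μ : Measure Ω) [IsProbabilityMeasure μ]
    {dX dU : ℕ}
    (X : Ω → (Fin dX → ℝ)) (U : Ω → (Fin dU → ℝ)) (Y : Ω → ℝ)
    (hX : Measurable X) (hU : Measurable U) (hY : Measurable Y)
    (hY2 : MemLp Y 2 μ)
    (hCMI : μ[Y | MeasurableSpace.comap U inferInstance]
      =ᵐ[μ] μ[Y | MeasurableSpace.comap (fun ω => (U ω, X ω)) inferInstance]) :
    ∀ f : (Fin dX → ℝ) → ℝ, Measurable f → MemLp (fun ω => f (X ω)) 2 μ →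
      ∫ ω, (Y ω - f (X ω)) ^ 2 ∂μ
        = (∫ ω, ((μ[Y | MeasurableSpace.comap U inferInstance]) ω - f (X ω)) ^ 2 ∂μ)
          + ∫ ω, (Y ω - (μ[Y | MeasurableSpace.comap U inferInstance]) ω) ^ 2 ∂μ :=
  mse_decomposition_of_cond_mean_indep_general μ X U Y hX hU hY2 hCMI
end

section
/- Let n, n', b_F, b_H be positive natural numbers, x₁,…,xₙ ∈ ℝ^{d_X}, u₁,…,uₙ ∈ ℝ^{d_U}, u'₁,…,u'_{n'} ∈ ℝ^{d_U}, y'₁,…,y'_{n'} ∈ ℝ, φ : ℝ^{d_X} → ℝ^{b_F} and ψ : ℝ^{d_U} → ℝ^{b_H} feature maps, w ∈ (0, 1), and λ > 0. Define Ĵ_w(α, β) := (1/(wn))·Σᵢ₌₁ⁿ (αᵀφ(xᵢ) − βᵀψ(uᵢ))² + (1/((1−w)n'))·Σᵢ₌₁^{n'} (βᵀψ(u'ᵢ) − y'ᵢ)², and the matrices M₁ := (1/(nw))·Σᵢ φ(xᵢ)φ(xᵢ)ᵀ + λI_{b_F}, M₂ := (1/(nw))·Σᵢ φ(xᵢ)ψ(uᵢ)ᵀ,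 M₃ := (1/(nw))·Σᵢ ψ(uᵢ)ψ(uᵢ)ᵀ + (1/(n'(1−w)))·Σᵢ ψ(u'ᵢ)ψ(u'ᵢ)ᵀ + λI_{b_H}, and b₁ := (1/(n'(1−w)))·Σᵢ y'ᵢ ψ(u'ᵢ). Then M₁ and the Schur complement M₃ − M₂ᵀM₁⁻¹M₂ are invertible, and the pair β̂ := (M₃ − M₂ᵀM₁⁻¹M₂)⁻¹ b₁, α̂ := M₁⁻¹ M₂ β̂ is the unique minimizer over (α, β) ∈ ℝ^{b_F} × ℝ^{b_H} of Ĵ_w(α, β) + λ(αᵀα + βᵀβ). -/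
/-!
Joint-RR is weighted ridge regression in the stacked parameter `(α, β)`, with design rows
`(φ xᵢ, -ψ uᵢ)` (target `0`, weight `1/(nw)`) and `(0, ψ u'ᵢ)` (target `y'ᵢ`, weight
`1/(n'(1-w))`). The Gram matrix of its normal equations is the block matrix
`[[M₁, -M₂], [-M₂ᵀ, M₃]]`, positive definite because of the ridge term. Hence its leading block
`M₁` is invertible, and `det = det M₁ * det S` makes the Schur complement `S` invertible; block
elimination shows that `(α̂, β̂)` solves the normal equations. Around a solution `v` of the normal
equations the ridge objective expands as `R (v + d) = R v + Σⱼ cⱼ (d ⬝ aⱼ)² + λ ‖d‖²`, so `v` is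
its unique minimizer.
-/

open Matrix

namespace Matrix

variable {R m n : Type*} [CommRing R] [Fintype m] [Fintype n] [DecidableEq m] [DecidableEq n]

theorem isUnit_schurComplement_of_isUnit_fromBlocks {A : Matrix m m R} (B : Matrix m n R)
    (C : Matrix n m R) (D : Matrix n n R) (hA : IsUnit A) (h : IsUnit (fromBlocks A B C D)) :
    IsUnit (D - C * A⁻¹ * B) := by
  have := hA.invertible
  rw [isUnit_iff_isUnit_det, det_fromBlocks₁₁, invOf_eq_nonsing_inv] at h
  exact (isUnit_iff_isUnit_det _).2 (isUnit_of_mul_isUnit_right h)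

theorem fromBlocks_neg_mulVec_sumElim_inv_schurComplement {A : Matrix m m R} (B : Matrix m n R)
    (C : Matrix n m R) (D : Matrix n n R) (hA : IsUnit A) (hS : IsUnit (D - C * A⁻¹ * B))
    (b : n → R) :
    fromBlocks A (-B) (-C) D *ᵥ
        Sum.elim (A⁻¹ *ᵥ (B *ᵥ ((D - C * A⁻¹ * B)⁻¹ *ᵥ b))) ((D - C * A⁻¹ * B)⁻¹ *ᵥ b) =
      Sum.elim (0 : m → R) b := by
  set y := (D - C * A⁻¹ * B)⁻¹ *ᵥ b
  have hy : (D - C * A⁻¹ * B) *ᵥ y = b := by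
    rw [mulVec_mulVec, mul_nonsing_inv _ ((isUnit_iff_isUnit_det _).1 hS), one_mulVec]
  rw [fromBlocks_mulVec, Sum.elim_comp_inl, Sum.elim_comp_inr]
  congr 1
  · rw [mulVec_mulVec, mul_nonsing_inv _ ((isUnit_iff_isUnit_det _).1 hA), one_mulVec,
      neg_mulVec, add_neg_cancel]
  · rw [← hy, sub_mulVec, neg_mulVec, mulVec_mulVec, mulVec_mulVec, Matrix.mul_assoc]
    abel

end Matrix

section Ridge

variable {m k : Type*} [Fintype m] [Fintype k] (a : m → k → ℝ)

noncomputable def ridgeObjective (c t : m → ℝ) (lam : ℝ) (v : k → ℝ) : ℝ :=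
  ∑ j, c j * (v ⬝ᵥ a j - t j) ^ 2 + lam * (v ⬝ᵥ v)

noncomputable def ridgeGram [DecidableEq k] (c : m → ℝ) (lam : ℝ) : Matrix k k ℝ :=
  ∑ j, c j • vecMulVec (a j) (a j) + lam • 1

noncomputable def ridgeRhs (c t : m → ℝ) : k → ℝ :=
  ∑ j, (c j * t j) • a j

variable [DecidableEq k]

theorem ridgeGram_posDef {c : m → ℝ} {lam : ℝ} (hc : ∀ j, 0 ≤ c j) (hlam : 0 < lam) :
    (ridgeGram a c lam).PosDef := by
  refine PosDef.posSemidef_add (posSemidef_sum _ fun j _ => ?_) (PosDef.one.smul hlam)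
  simpa using (posSemidef_vecMulVec_self_star (a j)).smul (hc j)

theorem ridgeGram_mulVec (c : m → ℝ) (lam : ℝ) (v : k → ℝ) :
    ridgeGram a c lam *ᵥ v = ∑ j, (c j * (a j ⬝ᵥ v)) • a j + lam • v := by
  simp only [ridgeGram, add_mulVec, sum_mulVec, smul_mulVec, vecMulVec_mulVec, op_smul_eq_smul,
    smul_smul, one_mulVec]

theorem ridgeObjective_add (c t : m → ℝ) (lam : ℝ) (v d : k → ℝ) :
    ridgeObjective a c t lam (v + d) = ridgeObjective a c t lam v
      + 2 * (d ⬝ᵥ (ridgeGram a c lam *ᵥ v - ridgeRhs a c t)) + ridgeObjective a c 0 lam d := by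
  have hterm : ∀ j, c j * ((v + d) ⬝ᵥ a j - t j) ^ 2 = c j * (v ⬝ᵥ a j - t j) ^ 2
      + 2 * (c j * (a j ⬝ᵥ v) * (d ⬝ᵥ a j) - c j * t j * (d ⬝ᵥ a j))
      + c j * (d ⬝ᵥ a j - 0) ^ 2 := by
    intro j
    rw [add_dotProduct, dotProduct_comm (a j)]
    ring
  have hcross : d ⬝ᵥ (ridgeGram a c lam *ᵥ v - ridgeRhs a c t)
      = ∑ j, (c j * (a j ⬝ᵥ v) * (d ⬝ᵥ a j) - c j * t j * (d ⬝ᵥ a j)) + lam * (d ⬝ᵥ v) := by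
    simp only [ridgeGram_mulVec, ridgeRhs, dotProduct_sub, dotProduct_add, dotProduct_sum,
      dotProduct_smul, smul_eq_mul, Finset.sum_sub_distrib]
    ring
  unfold ridgeObjective
  rw [Finset.sum_congr rfl fun j _ => hterm j, Finset.sum_add_distrib, Finset.sum_add_distrib,
    ← Finset.mul_sum, hcross, add_dotProduct, dotProduct_add, dotProduct_add, dotProduct_comm v d]
  simp only [Pi.zero_apply]
  ring

theorem ridgeObjective_lt_of_ridgeGram_mulVec_eq {c t : m → ℝ} {lam : ℝ} (hc : ∀ j, 0 ≤ c j)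
    (hlam : 0 < lam) {v : k → ℝ} (hv : ridgeGram a c lam *ᵥ v = ridgeRhs a c t) {v' : k → ℝ}
    (hne : v' ≠ v) : ridgeObjective a c t lam v < ridgeObjective a c t lam v' := by
  have hpos : 0 < ridgeObjective a c 0 lam (v' - v) := by
    have hsq : 0 ≤ ∑ j, c j * ((v' - v) ⬝ᵥ a j - 0) ^ 2 :=
      Finset.sum_nonneg fun j _ => mul_nonneg (hc j) (sq_nonneg _)
    have hnorm : 0 < (v' - v) ⬝ᵥ (v' - v) := by
      simpa using dotProduct_star_self_pos_iff.2 (sub_ne_zero.2 hne)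
    unfold ridgeObjective
    positivity
  have hexpand := ridgeObjective_add a c t lam v (v' - v)
  rw [hv, sub_self, dotProduct_zero, add_sub_cancel] at hexpand
  linarith

end Ridge

section JointDesign

variable {m m' ι κ : Type*} [Fintype m] [Fintype m']
  (f : m → ι → ℝ) (g : m → κ → ℝ) (h : m' → κ → ℝ)

def jointDesign : m ⊕ m' → ι ⊕ κ → ℝ :=
  Sum.elim (fun i => Sum.elim (f i) (-g i)) (fun j => Sum.elim 0 (h j))

theorem ridgeObjective_jointDesign [Fintype ι] [Fintype κ] (c₁ c₂ lam : ℝ) (y : m' → ℝ)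
    (α : ι → ℝ) (β : κ → ℝ) :
    ridgeObjective (jointDesign f g h) (Sum.elim (fun _ => c₁) (fun _ => c₂)) (Sum.elim 0 y) lam
        (Sum.elim α β) =
      c₁ * ∑ i, (α ⬝ᵥ f i - β ⬝ᵥ g i) ^ 2 + c₂ * ∑ j, (β ⬝ᵥ h j - y j) ^ 2
        + lam * (α ⬝ᵥ α + β ⬝ᵥ β) := by
  simp [ridgeObjective, jointDesign, Fintype.sum_sum_type, sumElim_dotProduct_sumElim,
    Finset.mul_sum, sub_eq_add_neg]

theorem ridgeGram_jointDesign [DecidableEq ι] [DecidableEq κ] (c₁ c₂ lam : ℝ) :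
    ridgeGram (jointDesign f g h) (Sum.elim (fun _ => c₁) (fun _ => c₂)) lam =
      fromBlocks (c₁ • ∑ i, vecMulVec (f i) (f i) + lam • 1)
        (-(c₁ • ∑ i, vecMulVec (f i) (g i))) (-(c₁ • ∑ i, vecMulVec (f i) (g i))ᵀ)
        (c₁ • ∑ i, vecMulVec (g i) (g i) + c₂ • ∑ j, vecMulVec (h j) (h j) + lam • 1) := by
  ext (p | p) (q | q) <;>
    simp [ridgeGram, jointDesign, Fintype.sum_sum_type, Matrix.sum_apply, vecMulVec_apply,
      Finset.mul_sum, one_apply, mul_comm]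

theorem ridgeRhs_jointDesign (c₁ c₂ : ℝ) (y : m' → ℝ) :
    ridgeRhs (jointDesign f g h) (Sum.elim (fun _ => c₁) (fun _ => c₂)) (Sum.elim 0 y) =
      Sum.elim (0 : ι → ℝ) (c₂ • ∑ j, y j • h j) := by
  ext (p | p) <;>
    simp [ridgeRhs, jointDesign, Fintype.sum_sum_type, Finset.sum_apply, Finset.mul_sum, mul_assoc]

end JointDesign

theorem jointRR_linear_closed_form_general
    {dX dU : ℕ} (n n' bF bH : ℕ)
    (x : Fin n → (Fin dX → ℝ)) (u : Fin n → (Fin dU → ℝ))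
    (u' : Fin n' → (Fin dU → ℝ)) (y' : Fin n' → ℝ)
    (φ : (Fin dX → ℝ) → (Fin bF → ℝ)) (ψ : (Fin dU → ℝ) → (Fin bH → ℝ))
    (w : ℝ) (hw : w ∈ Set.Ioo (0 : ℝ) 1) (lam : ℝ) (hlam : 0 < lam) :
    let J : (Fin bF → ℝ) × (Fin bH → ℝ) → ℝ := fun p =>
      (1 / (w * n)) * ∑ i, (p.1 ⬝ᵥ φ (x i) - p.2 ⬝ᵥ ψ (u i)) ^ 2
        + (1 / ((1 - w) * n')) * ∑ i, (p.2 ⬝ᵥ ψ (u' i) - y' i) ^ 2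
        + lam * (p.1 ⬝ᵥ p.1 + p.2 ⬝ᵥ p.2);
    let M₁ : Matrix (Fin bF) (Fin bF) ℝ :=
      (1 / ((n : ℝ) * w)) • ∑ i, vecMulVec (φ (x i)) (φ (x i)) + lam • (1 : Matrix _ _ ℝ);
    let M₂ : Matrix (Fin bF) (Fin bH) ℝ :=
      (1 / ((n : ℝ) * w)) • ∑ i, vecMulVec (φ (x i)) (ψ (u i));
    let M₃ : Matrix (Fin bH) (Fin bH) ℝ :=
      (1 / ((n : ℝ) * w)) • ∑ i, vecMulVec (ψ (u i)) (ψ (u i))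
        + (1 / ((n' : ℝ) * (1 - w))) • ∑ i, vecMulVec (ψ (u' i)) (ψ (u' i))
        + lam • (1 : Matrix _ _ ℝ);
    let b₁ : Fin bH → ℝ := (1 / ((n' : ℝ) * (1 - w))) • ∑ i, y' i • ψ (u' i);
    let S : Matrix (Fin bH) (Fin bH) ℝ := M₃ - M₂ᵀ * M₁⁻¹ * M₂;
    let β : Fin bH → ℝ := S⁻¹ *ᵥ b₁;
    let α : Fin bF → ℝ := M₁⁻¹ *ᵥ (M₂ *ᵥ β);
    IsUnit M₁ ∧ IsUnit S ∧
      ∀ p : (Fin bF → ℝ) × (Fin bH → ℝ),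
        J (α, β) ≤ J p ∧ (J p = J (α, β) → p = (α, β)) := by
  intro J M₁ M₂ M₃ b₁ S β α
  let design := jointDesign (fun i => φ (x i)) (fun i => ψ (u i)) (fun j => ψ (u' j))
  let weights : Fin n ⊕ Fin n' → ℝ :=
    Sum.elim (fun _ => 1 / ((n : ℝ) * w)) (fun _ => 1 / ((n' : ℝ) * (1 - w)))
  have hweights : ∀ j, 0 ≤ weights j := by
    obtain ⟨hw₀, hw₁⟩ := hw
    have h1w := sub_pos.2 hw₁
    rintro (j | j) <;> simp only [weights, Sum.elim_inl, Sum.elim_inr] <;> positivity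
  have hG : ridgeGram design weights lam = fromBlocks M₁ (-M₂) (-M₂ᵀ) M₃ :=
    ridgeGram_jointDesign _ _ _ _ _ _
  have hGpos : (fromBlocks M₁ (-M₂) (-M₂ᵀ) M₃).PosDef :=
    hG ▸ ridgeGram_posDef design hweights hlam
  have hM₁ : IsUnit M₁ := (hGpos.submatrix Sum.inl_injective).isUnit
  have hS : IsUnit S := by
    simpa using isUnit_schurComplement_of_isUnit_fromBlocks (-M₂) (-M₂ᵀ) M₃ hM₁ hGpos.isUnit
  have hnormal :
      ridgeGram design weights lam *ᵥ Sum.elim α β = ridgeRhs design weights (Sum.elim 0 y') := by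
    rw [hG, ridgeRhs_jointDesign]
    exact fromBlocks_neg_mulVec_sumElim_inv_schurComplement M₂ M₂ᵀ M₃ hM₁ hS b₁
  have hJ : ∀ p, J p = ridgeObjective design weights (Sum.elim 0 y') lam (Sum.elim p.1 p.2) := by
    intro p
    rw [ridgeObjective_jointDesign]
    simp only [J, mul_comm w, mul_comm (1 - w)]
  refine ⟨hM₁, hS, fun p => ?_⟩
  rcases eq_or_ne p (α, β) with rfl | hne
  · exact ⟨le_rfl, fun _ => rfl⟩
  · have hlt := ridgeObjective_lt_of_ridgeGram_mulVec_eq design hweights hlam hnormal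
      ((Equiv.sumArrowEquivProdArrow _ _ _).symm.injective.ne hne)
    rw [hJ, hJ]
    exact ⟨hlt.le, fun h => absurd h hlt.ne'⟩

/-- Theorem 2 of the paper: closed-form solution of ℓ₂-regularized
Joint-RR for linear-in-parameter models.  `M₁` and the Schur complement
`M₃ − M₂ᵀM₁⁻¹M₂` are invertible and `(α̂, β̂)` given by the block-wise inversion
formulas is the unique minimizer of `Ĵ_w(α, β) + λ(αᵀα + βᵀβ)`. -/
theorem jointRR_linear_closed_form
    {dX dU : ℕ} (n n' bF bH : ℕ) (hn : 0 < n) (hn' : 0 < n') (hbF : 0 < bF) (hbH : 0 < bH)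
    (x : Fin n → (Fin dX → ℝ)) (u : Fin n → (Fin dU → ℝ))
    (u' : Fin n' → (Fin dU → ℝ)) (y' : Fin n' → ℝ)
    (φ : (Fin dX → ℝ) → (Fin bF → ℝ)) (ψ : (Fin dU → ℝ) → (Fin bH → ℝ))
    (w : ℝ) (hw : w ∈ Set.Ioo (0 : ℝ) 1) (lam : ℝ) (hlam : 0 < lam) :
    let J : (Fin bF → ℝ) × (Fin bH → ℝ) → ℝ := fun p =>
      (1 / (w * n)) * ∑ i, (p.1 ⬝ᵥ φ (x i) - p.2 ⬝ᵥ ψ (u i)) ^ 2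
        + (1 / ((1 - w) * n')) * ∑ i, (p.2 ⬝ᵥ ψ (u' i) - y' i) ^ 2
        + lam * (p.1 ⬝ᵥ p.1 + p.2 ⬝ᵥ p.2);
    let M₁ : Matrix (Fin bF) (Fin bF) ℝ :=
      (1 / ((n : ℝ) * w)) • ∑ i, vecMulVec (φ (x i)) (φ (x i)) + lam • (1 : Matrix _ _ ℝ);
    let M₂ : Matrix (Fin bF) (Fin bH) ℝ :=
      (1 / ((n : ℝ) * w)) • ∑ i, vecMulVec (φ (x i)) (ψ (u i));
    let M₃ : Matrix (Fin bH) (Fin bH) ℝ :=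
      (1 / ((n : ℝ) * w)) • ∑ i, vecMulVec (ψ (u i)) (ψ (u i))
        + (1 / ((n' : ℝ) * (1 - w))) • ∑ i, vecMulVec (ψ (u' i)) (ψ (u' i))
        + lam • (1 : Matrix _ _ ℝ);
    let b₁ : Fin bH → ℝ := (1 / ((n' : ℝ) * (1 - w))) • ∑ i, y' i • ψ (u' i);
    let S : Matrix (Fin bH) (Fin bH) ℝ := M₃ - M₂ᵀ * M₁⁻¹ * M₂;
    let β : Fin bH → ℝ := S⁻¹ *ᵥ b₁;
    let α : Fin bF → ℝ := M₁⁻¹ *ᵥ (M₂ *ᵥ β);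
    IsUnit M₁ ∧ IsUnit S ∧
      ∀ p : (Fin bF → ℝ) × (Fin bH → ℝ),
        J (α, β) ≤ J p ∧ (J p = J (α, β) → p = (α, β)) :=
  jointRR_linear_closed_form_general n n' bF bH x u u' y' φ ψ w hw lam hlam
end

section
/- Let X be a real-valued random variable whose distribution is symmetric (X and −X have the same law) with E[X²] = σ² ∈ (0, ∞), let U be an ℝ^{d_U}-valued random variable independent of X, let θ ∈ ℝ, and set Y := θX. Then: (i) the joint law of (U, Y) = (U, θX) equals the joint law of (U, −θX), i.e., the (U, Y)-marginal is the same for parameter θ and for parameter −θ; (ii) E[Y | U] = 0 almost surely and E[Y | U, X] = θX almost surely, so that E[(E[Y | U] − E[Y | U, X])²] = θ²σ²; and (iii) E[(E[Y_θ | X] − E[Y_{−θ} | X])²] = 4θ²σ², where Y_θ := θX and Y_{−θ} := −θX. -/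
/-!
Both parameters `θ` and `-θ` make `Y` a function of `X` alone. Since `U` is independent of `X`,
the law of `(U, ±θX)` is the product of the law of `U` with that of `±θX`, and the two factors
agree because `X` is symmetric. Independence also makes `E[θX | U]` the constant `θ E[X] = 0`,
while `θX` is measurable with respect to `σ(U, X)` and `σ(X)`, so it is its own conditional
expectation there; the two squared distances are then `θ² E[X²]` and `(2θ)² E[X²]`.
-/

open MeasureTheory ProbabilityTheory

section

variable {Ω β γ E : Type*} [MeasurableSpace Ω] [MeasurableSpace β] [MeasurableSpace γ]
  {μ : Measure Ω}

theorem integral_eq_zero_of_map_eq_map_neg [NormedAddCommGroup E] [NormedSpace ℝ E]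
    [MeasurableSpace E] [BorelSpace E] [SecondCountableTopology E] {X : Ω → E}
    (hX : AEMeasurable X μ) (hsymm : μ.map X = μ.map (fun ω => -X ω)) :
    ∫ ω, X ω ∂μ = 0 := by
  have hself : ∫ ω, -X ω ∂μ = ∫ ω, X ω ∂μ := calc
    ∫ ω, -X ω ∂μ = ∫ x, x ∂(μ.map fun ω => -X ω) :=
      (integral_map hX.neg aestronglyMeasurable_id).symm
    _ = ∫ x, x ∂(μ.map X) := by rw [hsymm]
    _ = ∫ ω, X ω ∂μ := integral_map hX aestronglyMeasurable_id
  rw [integral_neg] at hself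
  have htwice : (2 : ℝ) • ∫ ω, X ω ∂μ = 0 := by
    rw [two_smul]
    nth_rw 1 [← hself]
    exact neg_add_cancel _
  exact (smul_eq_zero.mp htwice).resolve_left two_ne_zero

theorem map_const_mul_eq_map_neg_const_mul {X : Ω → ℝ} (hX : Measurable X)
    (hsymm : μ.map X = μ.map (fun ω => -X ω)) (c : ℝ) :
    μ.map (fun ω => c * X ω) = μ.map (fun ω => -c * X ω) := calc
  μ.map (fun ω => c * X ω) = (μ.map X).map (c * ·) :=
    (Measure.map_map (measurable_const_mul c) hX).symm
  _ = (μ.map fun ω => -X ω).map (c * ·) := by rw [hsymm]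
  _ = μ.map (fun ω => -c * X ω) := by
    rw [Measure.map_map (f := fun ω => -X ω) (measurable_const_mul c) hX.neg]
    congr 1
    funext ω
    simp

theorem map_prodMk_eq_of_indepFun [IsFiniteMeasure μ] {U : Ω → β} {V W : Ω → γ}
    (hU : AEMeasurable U μ) (hV : AEMeasurable V μ) (hW : AEMeasurable W μ)
    (hUV : IndepFun U V μ) (hUW : IndepFun U W μ) (hVW : μ.map V = μ.map W) :
    μ.map (fun ω => (U ω, V ω)) = μ.map (fun ω => (U ω, W ω)) := by
  rw [(indepFun_iff_map_prod_eq_prod_map_map hU hV).mp hUV,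
    (indepFun_iff_map_prod_eq_prod_map_map hU hW).mp hUW, hVW]

variable [NormedAddCommGroup E] [NormedSpace ℝ E]

theorem condExp_comap_comp [IsFiniteMeasure μ] {Y : Ω → β} (hY : Measurable Y) {g : β → E}
    (hg : StronglyMeasurable g) (hint : Integrable (fun ω => g (Y ω)) μ) :
    μ[fun ω => g (Y ω) | MeasurableSpace.comap Y inferInstance] = fun ω => g (Y ω) :=
  condExp_of_stronglyMeasurable hY.comap_le
    (hg.comp_measurable (Measurable.of_comap_le le_rfl)) hint

theorem condExp_comap_ae_eq_integral_of_indepFun [CompleteSpace E] [IsFiniteMeasure μ]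
    {X : Ω → β} {U : Ω → γ} (hX : Measurable X) (hU : Measurable U) (hXU : IndepFun X U μ) {g : β → E}
    (hg : StronglyMeasurable g) :
    μ[fun ω => g (X ω) | MeasurableSpace.comap U inferInstance]
      =ᵐ[μ] fun _ => ∫ ω, g (X ω) ∂μ :=
  condExp_indep_eq hX.comap_le hU.comap_le
    (hg.comp_measurable (Measurable.of_comap_le le_rfl)) hXU

end

theorem leCam_two_point_construction_general
    {Ω : Type*} [MeasurableSpace Ω] (μ : Measure Ω) [IsProbabilityMeasure μ]
    {dU : ℕ}
    (X : Ω → ℝ) (U : Ω → (Fin dU → ℝ))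
    (hX : Measurable X) (hU : Measurable U)
    (hsymm : μ.map X = μ.map (fun ω => -X ω))
    (hX2 : MemLp X 2 μ)
    (σ2 : ℝ) (hmom : ∫ ω, (X ω) ^ 2 ∂μ = σ2)
    (hindep : IndepFun X U μ)
    (θ : ℝ) :
    (μ.map (fun ω => (U ω, θ * X ω)) = μ.map (fun ω => (U ω, -θ * X ω)))
    ∧ ((μ[fun ω => θ * X ω | MeasurableSpace.comap U inferInstance]) =ᵐ[μ] 0
        ∧ (μ[fun ω => θ * X ω
            | MeasurableSpace.comap (fun ω' => (U ω', X ω')) inferInstance])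
          =ᵐ[μ] (fun ω => θ * X ω)
        ∧ ∫ ω, ((μ[fun ω' => θ * X ω' | MeasurableSpace.comap U inferInstance]) ω
            - (μ[fun ω' => θ * X ω'
                | MeasurableSpace.comap (fun ω'' => (U ω'', X ω'')) inferInstance]) ω) ^ 2 ∂μ
          = θ ^ 2 * σ2)
    ∧ ∫ ω, ((μ[fun ω' => θ * X ω' | MeasurableSpace.comap X inferInstance]) ω
        - (μ[fun ω' => -θ * X ω' | MeasurableSpace.comap X inferInstance]) ω) ^ 2 ∂μ
      = 4 * θ ^ 2 * σ2 := by
  have hXint : Integrable X μ := hX2.integrable one_le_two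
  have hmul_meas (c : ℝ) : StronglyMeasurable fun x : ℝ => c * x :=
    (measurable_const_mul c).stronglyMeasurable
  have hcondU : μ[fun ω => θ * X ω | MeasurableSpace.comap U inferInstance] =ᵐ[μ] 0 := by
    have hmean : ∫ ω, θ * X ω ∂μ = 0 := by
      rw [integral_const_mul, integral_eq_zero_of_map_eq_map_neg hX.aemeasurable hsymm, mul_zero]
    refine (condExp_comap_ae_eq_integral_of_indepFun hX hU hindep (hmul_meas θ)).trans ?_
    rw [hmean]
    rfl
  have hcondUX : μ[fun ω => θ * X ω
      | MeasurableSpace.comap (fun ω' => (U ω', X ω')) inferInstance] = fun ω => θ * X ω :=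
    condExp_comap_comp (hU.prodMk hX) (g := fun p => θ * p.2)
      ((measurable_const_mul θ).comp measurable_snd).stronglyMeasurable (hXint.const_mul θ)
  have hcondX (c : ℝ) : μ[fun ω => c * X ω | MeasurableSpace.comap X inferInstance]
      = fun ω => c * X ω :=
    condExp_comap_comp hX (hmul_meas c) (hXint.const_mul c)
  refine ⟨map_prodMk_eq_of_indepFun hU.aemeasurable (hX.const_mul θ).aemeasurable
      (hX.const_mul (-θ)).aemeasurable (hindep.symm.comp measurable_id (measurable_const_mul θ))
      (hindep.symm.comp measurable_id (measurable_const_mul (-θ)))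
      (map_const_mul_eq_map_neg_const_mul hX hsymm θ),
    ⟨hcondU, hcondUX.eventuallyEq, ?_⟩, ?_⟩
  · rw [integral_congr_ae (g := fun ω => θ ^ 2 * X ω ^ 2), integral_const_mul, hmom]
    filter_upwards [hcondU] with ω hω
    simp only [hω, hcondUX, Pi.zero_apply]
    ring
  · rw [hcondX, hcondX, integral_congr_ae (g := fun ω => (2 * θ) ^ 2 * X ω ^ 2)
      (.of_forall fun ω => by ring), integral_const_mul, hmom]
    ring

/-- two-point construction in the paper's minimax lower bound.
For `X` symmetric with `E[X²] = σ² ∈ (0,∞)`, `U` independent of `X`, and `Y := θX`: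
(i) the `(U, Y)`-marginal is the same for parameter `θ` and `−θ`;
(ii) `E[Y|U] = 0` a.s., `E[Y|U,X] = θX` a.s., and `E[(E[Y|U] − E[Y|U,X])²] = θ²σ²`;
(iii) `E[(E[Y_θ|X] − E[Y_{−θ}|X])²] = 4θ²σ²`. -/
theorem leCam_two_point_construction
    {Ω : Type*} [MeasurableSpace Ω] (μ : Measure Ω) [IsProbabilityMeasure μ]
    {dU : ℕ}
    (X : Ω → ℝ) (U : Ω → (Fin dU → ℝ))
    (hX : Measurable X) (hU : Measurable U)
    (hsymm : μ.map X = μ.map (fun ω => -X ω))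
    (hX2 : MemLp X 2 μ)
    (σ2 : ℝ) (hσ2 : 0 < σ2) (hmom : ∫ ω, (X ω) ^ 2 ∂μ = σ2)
    (hindep : IndepFun X U μ)
    (θ : ℝ) :
    (μ.map (fun ω => (U ω, θ * X ω)) = μ.map (fun ω => (U ω, -θ * X ω)))
    ∧ ((μ[fun ω => θ * X ω | MeasurableSpace.comap U inferInstance]) =ᵐ[μ] 0
        ∧ (μ[fun ω => θ * X ω
            | MeasurableSpace.comap (fun ω' => (U ω', X ω')) inferInstance])
          =ᵐ[μ] (fun ω => θ * X ω)
        ∧ ∫ ω, ((μ[fun ω' => θ * X ω' | MeasurableSpace.comap U inferInstance]) ω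
            - (μ[fun ω' => θ * X ω'
                | MeasurableSpace.comap (fun ω'' => (U ω'', X ω'')) inferInstance]) ω) ^ 2 ∂μ
          = θ ^ 2 * σ2)
    ∧ ∫ ω, ((μ[fun ω' => θ * X ω' | MeasurableSpace.comap X inferInstance]) ω
        - (μ[fun ω' => -θ * X ω' | MeasurableSpace.comap X inferInstance]) ω) ^ 2 ∂μ
      = 4 * θ ^ 2 * σ2 :=
  leCam_two_point_construction_general μ X U hX hU hsymm hX2 σ2 hmom hindep θ
end
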